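/- arXiv:2101.11050 — 2 statements merged into one kernel-verified Lean document; each statement's English description precedes it below -/
import Mathlib

section
/- Define Δ : ℍ → ℂ by Δ(z) = q·∏_{ℓ=1}^{∞} (1 − q^ℓ)^{24}, where q = e^{2πiz} and ℍ = {z ∈ ℂ : Im z > 0}. Then: (a) for every z ∈ ℍ the family ((1 − e^{2πiℓz})^{24})_{ℓ≥1} is multipliable, so Δ is well defined; (b) Δ is holomorphic (complex differentiable) on ℍ; and (c) Δ(z) ≠ 0 for every z ∈ ℍ. -/
open Complex Real

/-- The discriminant cusp form `Δ(z) = q·∏_{ℓ≥1} (1 − q^ℓ)^{24}` with `q = e^{2πiz}`. -/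
noncomputable def discForm (z : ℂ) : ℂ :=
  Complex.exp (2 * Real.pi * Complex.I * z) *
    ∏' ℓ : ℕ, (1 - Complex.exp (2 * Real.pi * Complex.I * z) ^ (ℓ + 1)) ^ 24

namespace DiscFormAux

lemma re_two_pi_I (z : ℂ) : (2 * ↑Real.pi * Complex.I * z).re = -(2 * Real.pi * z.im) := by
  simp [Complex.mul_re, Complex.mul_im]

lemma normq_le {c : ℝ} {z : ℂ} (hz : c ≤ z.im) :
    ‖Complex.exp (2 * Real.pi * Complex.I * z)‖ ≤ Real.exp (-(2 * Real.pi * c)) := by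
  rw [Complex.norm_exp, re_two_pi_I]
  apply Real.exp_le_exp.2
  nlinarith [Real.pi_pos]

lemma rexp_lt_one {c : ℝ} (hc : 0 < c) : Real.exp (-(2 * Real.pi * c)) < 1 := by
  apply Real.exp_lt_one_iff.2
  nlinarith [Real.pi_pos]

lemma normq_lt {z : ℂ} (hz : 0 < z.im) :
    ‖Complex.exp (2 * Real.pi * Complex.I * z)‖ < 1 :=
  lt_of_le_of_lt (normq_le le_rfl) (rexp_lt_one hz)

/-- Bound on the principal logarithm of `1 - w`. -/
lemma norm_log_one_sub_le' {r : ℝ} (hr : r < 1) {w : ℂ} (hw : ‖w‖ ≤ r) :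
    ‖Complex.log (1 - w)‖ ≤ (r / (2 * (1 - r)) + 1) * ‖w‖ := by
  have h0 : 0 ≤ ‖w‖ := norm_nonneg w
  have hw1 : ‖-w‖ < 1 := by rw [norm_neg]; linarith
  have key := Complex.norm_log_one_add_le hw1
  rw [show (1 : ℂ) + -w = 1 - w by ring, norm_neg] at key
  refine key.trans ?_
  have h1 : 0 < 1 - r := by linarith
  have h2 : 0 < 1 - ‖w‖ := by linarith
  have hinv : (1 - ‖w‖)⁻¹ ≤ (1 - r)⁻¹ := by
    apply inv_anti₀ h1; linarith
  have h3 : ‖w‖ ^ 2 * (1 - ‖w‖)⁻¹ ≤ r * ‖w‖ * (1 - r)⁻¹ := by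
    apply mul_le_mul (by nlinarith) hinv (by positivity) (mul_nonneg (h0.trans hw) h0)
  have h4 : (r / (2 * (1 - r))) * ‖w‖ = r * ‖w‖ * (1 - r)⁻¹ / 2 := by
    rw [div_mul_eq_mul_div, mul_comm 2 (1-r), ← div_div, div_eq_mul_inv (r*‖w‖)]
  nlinarith

lemma hC_nonneg {r : ℝ} (h0 : 0 ≤ r) (h1 : r < 1) : 0 ≤ r / (2 * (1 - r)) + 1 := by
  have : 0 < 1 - r := by linarith
  positivity

lemma hne {z : ℂ} (hz : 0 < z.im) (ℓ : ℕ) :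
    1 - Complex.exp (2 * Real.pi * Complex.I * z) ^ (ℓ + 1) ≠ 0 := by
  intro h
  have h1 : Complex.exp (2 * Real.pi * Complex.I * z) ^ (ℓ + 1) = 1 := by
    linear_combination -h
  have := normq_lt hz
  have h2 : ‖Complex.exp (2 * Real.pi * Complex.I * z) ^ (ℓ + 1)‖ < 1 := by
    rw [norm_pow]
    exact pow_lt_one₀ (norm_nonneg _) this (Nat.succ_ne_zero ℓ)
  rw [h1] at h2
  simp at h2

lemma hsumlog {z : ℂ} (hz : 0 < z.im) :
    Summable fun ℓ : ℕ =>
      Complex.log (1 - Complex.exp (2 * Real.pi * Complex.I * z) ^ (ℓ + 1)) := by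
  set r := ‖Complex.exp (2 * Real.pi * Complex.I * z)‖ with hr
  have h0 : 0 ≤ r := norm_nonneg _
  have h1 : r < 1 := normq_lt hz
  apply Summable.of_norm_bounded (g := fun ℓ : ℕ => (r / (2 * (1 - r)) + 1) * r ^ (ℓ + 1))
  · apply Summable.mul_left
    simpa [pow_succ'] using (summable_geometric_of_lt_one h0 h1).mul_left r
  · intro ℓ
    have hwle : ‖Complex.exp (2 * Real.pi * Complex.I * z) ^ (ℓ + 1)‖ ≤ r := by
      rw [norm_pow]
      exact pow_le_of_le_one h0 h1.le (Nat.succ_ne_zero ℓ)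
    refine (norm_log_one_sub_le' h1 hwle).trans ?_
    apply mul_le_mul_of_nonneg_left _ (hC_nonneg h0 h1)
    rw [norm_pow]
lemma hasProd_disc {z : ℂ} (hz : 0 < z.im) :
    HasProd (fun ℓ : ℕ => (1 - Complex.exp (2 * Real.pi * Complex.I * z) ^ (ℓ + 1)) ^ 24)
      (Complex.exp (24 * ∑' ℓ : ℕ,
        Complex.log (1 - Complex.exp (2 * Real.pi * Complex.I * z) ^ (ℓ + 1)))) := by
  have h := ((hsumlog hz).hasSum.mul_left 24).cexp
  have heq : (cexp ∘ fun ℓ : ℕ =>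
      24 * Complex.log (1 - Complex.exp (2 * Real.pi * Complex.I * z) ^ (ℓ + 1))) =
      fun ℓ : ℕ => (1 - Complex.exp (2 * Real.pi * Complex.I * z) ^ (ℓ + 1)) ^ 24 := by
    funext ℓ
    simp only [Function.comp_apply]
    rw [show (24 : ℂ) = ((24 : ℕ) : ℂ) by norm_num, Complex.exp_nat_mul,
      Complex.exp_log (hne hz ℓ)]
  rwa [heq] at h

noncomputable def G (z : ℂ) : ℂ :=
  Complex.exp (2 * Real.pi * Complex.I * z) *
    Complex.exp (24 * ∑' ℓ : ℕ,
      Complex.log (1 - Complex.exp (2 * Real.pi * Complex.I * z) ^ (ℓ + 1)))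

lemma discForm_eq {z : ℂ} (hz : 0 < z.im) : discForm z = G z := by
  rw [discForm, G, (hasProd_disc hz).tprod_eq]

lemma diff_tsum {z₀ : ℂ} (hz : 0 < z₀.im) :
    DifferentiableAt ℂ (fun z : ℂ => ∑' ℓ : ℕ,
      Complex.log (1 - Complex.exp (2 * Real.pi * Complex.I * z) ^ (ℓ + 1))) z₀ := by
  set c := z₀.im / 2 with hc
  have hc0 : 0 < c := by positivity
  set r := Real.exp (-(2 * Real.pi * c)) with hrdef
  have h0 : 0 ≤ r := (Real.exp_pos _).le
  have h1 : r < 1 := rexp_lt_one hc0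
  set U : Set ℂ := Complex.im ⁻¹' Set.Ioi c with hU
  have hUopen : IsOpen U := isOpen_Ioi.preimage Complex.continuous_im
  have hz₀U : z₀ ∈ U := by simp only [hU, Set.mem_preimage, Set.mem_Ioi]; linarith
  have hdiff : DifferentiableOn ℂ (fun z : ℂ => ∑' ℓ : ℕ,
      Complex.log (1 - Complex.exp (2 * Real.pi * Complex.I * z) ^ (ℓ + 1))) U := by
    apply differentiableOn_tsum_of_summable_norm
      (u := fun ℓ : ℕ => (r / (2 * (1 - r)) + 1) * r ^ (ℓ + 1))
    · apply Summable.mul_left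
      simpa [pow_succ'] using (summable_geometric_of_lt_one h0 h1).mul_left r
    · intro ℓ
      intro z hzU
      have hzim : c < z.im := hzU
      have hqlt : ‖Complex.exp (2 * Real.pi * Complex.I * z)‖ ≤ r := normq_le hzim.le
      have hwlt : ‖Complex.exp (2 * Real.pi * Complex.I * z) ^ (ℓ + 1)‖ < 1 := by
        rw [norm_pow]
        exact pow_lt_one₀ (norm_nonneg _) (lt_of_le_of_lt hqlt h1) (Nat.succ_ne_zero ℓ)
      apply DifferentiableAt.differentiableWithinAt
      apply DifferentiableAt.clog
      · exact (differentiableAt_const 1).sub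
          (((differentiableAt_id.const_mul (2 * Real.pi * Complex.I)).cexp).pow (ℓ + 1))
      · rw [Complex.mem_slitPlane_iff]
        left
        have := Complex.abs_re_le_norm (Complex.exp (2 * Real.pi * Complex.I * z) ^ (ℓ + 1))
        simp only [Complex.sub_re, Complex.one_re]
        have := abs_le.1 this
        linarith [this.2]
    · exact hUopen
    · intro ℓ z hzU
      have hzim : c < z.im := hzU
      have hqle : ‖Complex.exp (2 * Real.pi * Complex.I * z)‖ ≤ r := normq_le hzim.le
      have hwle : ‖Complex.exp (2 * Real.pi * Complex.I * z) ^ (ℓ + 1)‖ ≤ r := by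
        rw [norm_pow]
        calc ‖Complex.exp (2 * Real.pi * Complex.I * z)‖ ^ (ℓ + 1)
            ≤ r ^ (ℓ + 1) := pow_le_pow_left₀ (norm_nonneg _) hqle _
          _ ≤ r := pow_le_of_le_one h0 h1.le (Nat.succ_ne_zero ℓ)
      refine (norm_log_one_sub_le' h1 hwle).trans ?_
      apply mul_le_mul_of_nonneg_left _ (hC_nonneg h0 h1)
      rw [norm_pow]
      exact pow_le_pow_left₀ (norm_nonneg _) hqle _
  exact hdiff.differentiableAt (hUopen.mem_nhds hz₀U)

lemma diff_G {z₀ : ℂ} (hz : 0 < z₀.im) : DifferentiableAt ℂ G z₀ := by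
  apply DifferentiableAt.mul
  · exact (differentiableAt_id.const_mul (2 * Real.pi * Complex.I)).cexp
  · exact ((diff_tsum hz).const_mul 24).cexp

end DiscFormAux

open DiscFormAux in
/-- (a) For every `z` in the upper half-plane the family `((1 − q^ℓ)^{24})_{ℓ≥1}`
(with `q = e^{2πiz}`) is multipliable, so `Δ` is well defined; (b) `Δ` is holomorphic
on the upper half-plane; (c) `Δ(z) ≠ 0` for every `z` in the upper half-plane. -/
theorem discForm_multipliable_differentiable_ne_zero :
    (∀ z : ℂ, 0 < z.im →
      Multipliable fun ℓ : ℕ =>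
        (1 - Complex.exp (2 * Real.pi * Complex.I * z) ^ (ℓ + 1)) ^ 24) ∧
    (∀ z : ℂ, 0 < z.im → DifferentiableAt ℂ discForm z) ∧
    (∀ z : ℂ, 0 < z.im → discForm z ≠ 0) := by
  refine ⟨fun z hz => (hasProd_disc hz).multipliable, fun z hz => ?_, fun z hz => ?_⟩
  · have hS : IsOpen {w : ℂ | 0 < w.im} := isOpen_lt continuous_const Complex.continuous_im
    have hev : discForm =ᶠ[nhds z] G := by
      filter_upwards [hS.mem_nhds hz] with w hw
      exact discForm_eq hw
    exact (diff_G hz).congr_of_eventuallyEq hev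
  · rw [discForm_eq hz, G]
    exact mul_ne_zero (Complex.exp_ne_zero _) (Complex.exp_ne_zero _)
end

section
/- Define τ : ℕ≥1 → ℤ (the Ramanujan tau function) by letting τ(n) be the coefficient of X^n in the integer polynomial X·∏_{ℓ=1}^{n} (1 − X^ℓ)^{24} (this coefficient is independent of truncating the product at any index ≥ n). Define Δ : ℍ → ℂ by Δ(z) = q·∏_{ℓ=1}^{∞} (1 − q^ℓ)^{24}, where q = e^{2πiz}. Then for every z ∈ ℍ the series ∑_{n=1}^{∞} τ(n)·e^{2πinz} converges absolutely and equals Δ(z); in particular τ(1) = 1, so that Δ(z) = ∑_{n≥1} τ(n) q^n is the normalized weight 12 cusp form expansion. -/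
open Complex Real Polynomial

/-- The Ramanujan tau function: `τ(n)` is the coefficient of `X^n` in the integral
polynomial `X·∏_{ℓ=1}^{n} (1 − X^ℓ)^{24}`. -/
noncomputable def ramanujanTau (n : ℕ) : ℤ :=
  ((Polynomial.X : Polynomial ℤ) *
      ∏ ℓ ∈ Finset.Icc 1 n, (1 - (Polynomial.X : Polynomial ℤ) ^ ℓ) ^ 24).coeff n

namespace DiscFormAux

/-- Coefficientwise domination of integer polynomials. -/
def RDom (p q : Polynomial ℤ) : Prop := ∀ k, |p.coeff k| ≤ q.coeff k

lemma RDom.mul {p q P Q : Polynomial ℤ} (h1 : RDom p P) (h2 : RDom q Q) :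
    RDom (p * q) (P * Q) := by
  intro k
  rw [Polynomial.coeff_mul, Polynomial.coeff_mul]
  refine le_trans (Finset.abs_sum_le_sum_abs _ _) (Finset.sum_le_sum ?_)
  intro x _
  rw [abs_mul]
  exact mul_le_mul (h1 _) (h2 _) (abs_nonneg _) ((abs_nonneg _).trans (h1 _))

lemma RDom.one : RDom 1 1 := by
  intro k
  rcases eq_or_ne k 0 with h | h <;> simp [Polynomial.coeff_one, h]

lemma RDom.pow {p P : Polynomial ℤ} (h : RDom p P) (n : ℕ) : RDom (p ^ n) (P ^ n) := by
  induction n with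
  | zero => simpa using RDom.one
  | succ n ih => rw [pow_succ, pow_succ]; exact ih.mul h

lemma RDom.X : RDom Polynomial.X Polynomial.X := by
  intro k; simp [Polynomial.coeff_X]; split_ifs <;> simp

lemma RDom.base (ℓ : ℕ) (hℓ : 1 ≤ ℓ) : RDom (1 - Polynomial.X ^ ℓ) (1 + Polynomial.X ^ ℓ) := by
  intro k
  simp only [Polynomial.coeff_sub, Polynomial.coeff_add, Polynomial.coeff_one,
    Polynomial.coeff_X_pow]
  rcases eq_or_ne k 0 with rfl | h0
  · have : ℓ ≠ 0 := by omega
    simp [this.symm]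
  · rcases eq_or_ne k ℓ with rfl | hk
    · simp [h0]
    · simp [h0, hk, Ne.symm hk]

lemma RDom.prod {s : Finset ℕ} {f g : ℕ → Polynomial ℤ} (h : ∀ i ∈ s, RDom (f i) (g i)) :
    RDom (∏ i ∈ s, f i) (∏ i ∈ s, g i) := by
  induction s using Finset.cons_induction with
  | empty => simpa using RDom.one
  | cons a s ha ih =>
    rw [Finset.prod_cons, Finset.prod_cons]
    exact (h a (Finset.mem_cons_self _ _)).mul
      (ih fun i hi => h i (Finset.mem_cons.mpr (Or.inr hi)))

/-- Truncated product with minus signs. -/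
noncomputable def PM (N : ℕ) : Polynomial ℤ :=
  Polynomial.X * ∏ ℓ ∈ Finset.Icc 1 N, (1 - (Polynomial.X : Polynomial ℤ) ^ ℓ) ^ 24

/-- Truncated product with plus signs. -/
noncomputable def PP (N : ℕ) : Polynomial ℤ :=
  Polynomial.X * ∏ ℓ ∈ Finset.Icc 1 N, (1 + (Polynomial.X : Polynomial ℤ) ^ ℓ) ^ 24

lemma tau_eq_PM (n : ℕ) : ramanujanTau n = (PM n).coeff n := rfl

lemma PM_coeff_stab {n N : ℕ} (h : n ≤ N) : (PM N).coeff n = ramanujanTau n := by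
  rw [tau_eq_PM]
  induction N with
  | zero =>
    have : n = 0 := by omega
    subst this; rfl
  | succ N ih =>
    rcases eq_or_lt_of_le h with rfl | hlt
    · rfl
    · have hn : n ≤ N := by omega
      have hsplit : PM (N + 1) = PM N * (1 - Polynomial.X ^ (N + 1)) ^ 24 := by
        rw [PM, PM, Finset.prod_Icc_succ_top (by omega), mul_assoc]
      obtain ⟨g, hg⟩ : (Polynomial.X : Polynomial ℤ) ^ (N + 1) ∣
          ((1 - Polynomial.X ^ (N + 1)) ^ 24 - 1) := by
        have := sub_dvd_pow_sub_pow (1 - (Polynomial.X : Polynomial ℤ) ^ (N + 1)) 1 24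
        simp only [one_pow] at this
        have h2 : (1 - (Polynomial.X : Polynomial ℤ) ^ (N + 1)) - 1 = -(X ^ (N + 1)) := by ring
        rw [h2, neg_dvd] at this
        exact this
      have hrw : (1 - (Polynomial.X : Polynomial ℤ) ^ (N + 1)) ^ 24 =
          1 + Polynomial.X ^ (N + 1) * g := by
        rw [← hg]; ring
      rw [hsplit, hrw, mul_add, mul_one, Polynomial.coeff_add, ← mul_assoc,
        mul_comm (PM N) ((Polynomial.X : Polynomial ℤ) ^ (N + 1)), mul_assoc, mul_comm,
        Polynomial.coeff_mul_X_pow']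
      simp only [if_neg (by omega : ¬ N + 1 ≤ n), add_zero]
      exact ih hn

lemma tau_zero : ramanujanTau 0 = 0 := by
  simp [ramanujanTau]

lemma tau_one : ramanujanTau 1 = 1 := by
  rw [ramanujanTau]
  have h1 : Finset.Icc 1 1 = {1} := rfl
  rw [h1, Finset.prod_singleton, pow_one, show (1 : ℕ) = 0 + 1 from rfl,
    Polynomial.coeff_X_mul, Polynomial.coeff_zero_eq_eval_zero]
  simp

lemma RDom_PM (N : ℕ) : RDom (PM N) (PP N) :=
  RDom.X.mul (RDom.prod fun i hi => (RDom.base i (Finset.mem_Icc.mp hi).1).pow 24)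

lemma coeff_le_aeval (P : Polynomial ℤ) (hP : ∀ k, 0 ≤ P.coeff k) {x : ℝ} (hx0 : 0 ≤ x)
    (n : ℕ) : (P.coeff n : ℝ) * x ^ n ≤ (Polynomial.aeval x) P := by
  rw [Polynomial.aeval_eq_sum_range]
  rcases le_or_gt n P.natDegree with h | h
  · have := Finset.single_le_sum (s := Finset.range (P.natDegree + 1))
      (f := fun i => (P.coeff i : ℝ) • x ^ i)
      (fun i _ => by have := hP i; simp only [zsmul_eq_mul, smul_eq_mul]; positivity)
      (Finset.mem_range.mpr (show n < P.natDegree + 1 by omega))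
    simpa [zsmul_eq_mul] using this
  · rw [Polynomial.coeff_eq_zero_of_natDegree_lt h]
    push_cast
    refine le_trans (by simp) (Finset.sum_nonneg ?_)
    intro i _
    have := hP i
    simp only [zsmul_eq_mul]
    positivity

lemma aeval_PP_le {x : ℝ} (hx0 : 0 < x) (hx1 : x < 1) (N : ℕ) :
    (Polynomial.aeval x) (PP N) ≤ Real.exp (24 * (1 - x)⁻¹) := by
  rw [PP, map_mul, map_prod, Polynomial.aeval_X]
  have hterm : ∀ ℓ ∈ Finset.Icc 1 N,
      (Polynomial.aeval x) ((1 + (Polynomial.X : Polynomial ℤ) ^ ℓ) ^ 24) = (1 + x ^ ℓ) ^ 24 := by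
    intro ℓ _; simp
  rw [Finset.prod_congr rfl hterm]
  have h1 : ∀ ℓ ∈ Finset.Icc 1 N, (1 + x ^ ℓ) ^ 24 ≤ Real.exp (24 * x ^ ℓ) := by
    intro ℓ _
    have h := Real.add_one_le_exp (x ^ ℓ)
    calc (1 + x ^ ℓ) ^ 24 ≤ Real.exp (x ^ ℓ) ^ 24 := by
          apply pow_le_pow_left₀ (by positivity) (by linarith)
      _ = Real.exp (24 * x ^ ℓ) := by
          rw [← Real.exp_nat_mul]; norm_num
  calc x * ∏ ℓ ∈ Finset.Icc 1 N, (1 + x ^ ℓ) ^ 24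
      ≤ 1 * ∏ ℓ ∈ Finset.Icc 1 N, Real.exp (24 * x ^ ℓ) := by
        apply mul_le_mul hx1.le (Finset.prod_le_prod (fun ℓ _ => by positivity) h1)
          (Finset.prod_nonneg (fun ℓ _ => by positivity)) zero_le_one
    _ = Real.exp (∑ ℓ ∈ Finset.Icc 1 N, 24 * x ^ ℓ) := by rw [one_mul, Real.exp_sum]
    _ ≤ Real.exp (24 * (1 - x)⁻¹) := by
        apply Real.exp_le_exp.mpr
        rw [← Finset.mul_sum]
        have : ∑ ℓ ∈ Finset.Icc 1 N, x ^ ℓ ≤ (1 - x)⁻¹ := by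
          calc ∑ ℓ ∈ Finset.Icc 1 N, x ^ ℓ
              ≤ ∑' ℓ : ℕ, x ^ ℓ := by
                apply Summable.sum_le_tsum _ (fun i _ => by positivity)
                  (summable_geometric_of_lt_one hx0.le hx1)
            _ = (1 - x)⁻¹ := tsum_geometric_of_lt_one hx0.le hx1
        nlinarith
  
/-- The uniform coefficient bound. -/
lemma coeff_PM_bound {x : ℝ} (hx0 : 0 < x) (hx1 : x < 1) (N n : ℕ) :
    |((PM N).coeff n : ℝ)| * x ^ n ≤ Real.exp (24 * (1 - x)⁻¹) := by
  have hd := RDom_PM N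
  have hnn : ∀ k, 0 ≤ (PP N).coeff k := fun k => le_trans (abs_nonneg _) (hd k)
  calc |((PM N).coeff n : ℝ)| * x ^ n
      ≤ ((PP N).coeff n : ℝ) * x ^ n := by
        apply mul_le_mul_of_nonneg_right _ (by positivity)
        rw [← Int.cast_abs]
        exact_mod_cast hd n
    _ ≤ (Polynomial.aeval x) (PP N) := coeff_le_aeval _ hnn hx0.le n
    _ ≤ Real.exp (24 * (1 - x)⁻¹) := aeval_PP_le hx0 hx1 N

/-- Binomial estimate: `‖(1-w)^24 - 1‖ ≤ 2^24 ‖w‖` for `‖w‖ ≤ 1`. -/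
lemma norm_one_sub_pow_sub_one_le {w : ℂ} (hw : ‖w‖ ≤ 1) :
    ‖(1 - w) ^ 24 - 1‖ ≤ 2 ^ 24 * ‖w‖ := by
  have hexp : (1 - w) ^ 24 = ∑ j ∈ Finset.range 25, (-w) ^ j * 1 ^ (24 - j) * (24).choose j := by
    rw [show (1 : ℂ) - w = -w + 1 by ring, add_pow]
  have hsum : (1 - w) ^ 24 - 1 =
      ∑ j ∈ Finset.range 24, (-w) ^ (j + 1) * ((24).choose (j + 1) : ℂ) := by
    rw [hexp, Finset.sum_range_succ']
    simp only [pow_zero, one_pow, mul_one, Nat.choose_zero_right, Nat.cast_one, add_sub_cancel_right]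
  rw [hsum]
  refine le_trans (norm_sum_le _ _) ?_
  have step : ∀ j ∈ Finset.range 24,
      ‖(-w) ^ (j + 1) * ((24).choose (j + 1) : ℂ)‖ ≤ ((24).choose (j + 1) : ℝ) * ‖w‖ := by
    intro j _
    rw [norm_mul, norm_pow, norm_neg, Complex.norm_natCast, mul_comm]
    apply mul_le_mul_of_nonneg_left _ (by positivity)
    have h1 : ‖w‖ ^ (j + 1) ≤ ‖w‖ ^ 1 := pow_le_pow_of_le_one (norm_nonneg w) hw (by omega)
    simpa using h1
  refine le_trans (Finset.sum_le_sum step) ?_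
  rw [← Finset.sum_mul]
  apply mul_le_mul_of_nonneg_right _ (norm_nonneg w)
  have h1 := Nat.sum_range_choose 24
  have h2 := Finset.sum_range_succ' (fun i => (24).choose i) 24
  have h3 : ∑ j ∈ Finset.range 24, (24).choose (j + 1) ≤ 2 ^ 24 := by
    simp only [h2] at h1
    omega
  exact_mod_cast h3

end DiscFormAux

open Filter Topology DiscFormAux

set_option maxHeartbeats 2000000 in
/-- For every `z` in the upper half-plane, the `q`-expansion `∑_{n≥1} τ(n) e^{2πinz}`
converges absolutely and equals `Δ(z)`; moreover `τ(1) = 1`, so this expansion is the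
normalized weight 12 cusp form expansion. -/
theorem discForm_qExpansion :
    (∀ z : ℂ, 0 < z.im →
      Summable (fun n : ℕ =>
        ‖(ramanujanTau (n + 1) : ℂ) *
          Complex.exp (2 * Real.pi * Complex.I * ((n : ℂ) + 1) * z)‖) ∧
      ∑' n : ℕ,
          (ramanujanTau (n + 1) : ℂ) *
            Complex.exp (2 * Real.pi * Complex.I * ((n : ℂ) + 1) * z) = discForm z) ∧
    ramanujanTau 1 = 1 := by
  refine ⟨fun z hz => ?_, tau_one⟩
  set q : ℂ := Complex.exp (2 * Real.pi * Complex.I * z) with hqdef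
  -- `‖q‖ < 1`
  have hr1 : ‖q‖ < 1 := by
    rw [hqdef, Complex.norm_exp]
    apply Real.exp_lt_one_iff.mpr
    have h : (2 * ↑Real.pi * Complex.I * z).re = -(2 * Real.pi * z.im) := by
      simp [Complex.mul_re, Complex.mul_im]
    rw [h]
    have := Real.pi_pos
    nlinarith
  set r : ℝ := ‖q‖ with hrdef
  have hr0 : 0 ≤ r := norm_nonneg _
  set x : ℝ := (1 + r) / 2 with hxdef
  have hx0 : 0 < x := by rw [hxdef]; linarith
  have hx1 : x < 1 := by rw [hxdef]; linarith
  have hrx : r < x := by rw [hxdef]; linarith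
  set ρ : ℝ := r / x with hρdef
  have hρ0 : 0 ≤ ρ := div_nonneg hr0 hx0.le
  have hρ1 : ρ < 1 := (div_lt_one hx0).mpr hrx
  have hrfact : r = x * ρ := by rw [hρdef]; field_simp
  set C : ℝ := Real.exp (24 * (1 - x)⁻¹) with hCdef
  have hC0 : 0 < C := Real.exp_pos _
  -- the coefficient bound
  have bound1 : ∀ N n : ℕ, ‖((PM N).coeff n : ℂ) * q ^ n‖ ≤ C * ρ ^ n := by
    intro N n
    rw [norm_mul, norm_pow]
    have h1 : ‖((PM N).coeff n : ℂ)‖ = |((PM N).coeff n : ℝ)| := by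
      rw [show (((PM N).coeff n : ℤ) : ℂ) = (((PM N).coeff n : ℝ) : ℂ) by push_cast; rfl,
        Complex.norm_real, Real.norm_eq_abs]
    rw [h1, ← hrdef, hrfact, mul_pow, ← mul_assoc]
    exact mul_le_mul_of_nonneg_right (coeff_PM_bound hx0 hx1 N n) (by positivity)
  have bound_tau : ∀ n : ℕ, ‖(ramanujanTau n : ℂ) * q ^ n‖ ≤ C * ρ ^ n := by
    intro n
    have := bound1 n n
    rwa [PM_coeff_stab le_rfl] at this
  set f : ℕ → ℂ := fun n => (ramanujanTau n : ℂ) * q ^ n with hfdef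
  have hgeo : Summable (fun n : ℕ => C * ρ ^ n) :=
    (summable_geometric_of_lt_one hρ0 hρ1).mul_left C
  have hfs : Summable (fun n => ‖f n‖) :=
    Summable.of_nonneg_of_le (fun n => norm_nonneg _) bound_tau hgeo
  have hf : Summable f := hfs.of_norm
  -- partial evaluations
  set g : ℕ → ℕ → ℂ := fun N n => ((PM N).coeff n : ℂ) * q ^ n with hgdef
  have hgsum : ∀ N, HasSum (g N) ((Polynomial.aeval q) (PM N)) := by
    intro N
    have hvanish : ∀ n ∉ Finset.range ((PM N).natDegree + 1), g N n = 0 := by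
      intro n hn
      rw [Finset.mem_range, not_lt] at hn
      rw [hgdef]
      simp only
      rw [Polynomial.coeff_eq_zero_of_natDegree_lt (by omega), Int.cast_zero, zero_mul]
    have h1 : HasSum (g N) _ := hasSum_sum_of_ne_finset_zero hvanish
    have h2 : ∑ n ∈ Finset.range ((PM N).natDegree + 1), g N n = (Polynomial.aeval q) (PM N) := by
      rw [Polynomial.aeval_eq_sum_range]
      apply Finset.sum_congr rfl
      intro i _
      rw [zsmul_eq_mul]
    rwa [h2] at h1
  have hgsummable : ∀ N, Summable (g N) := fun N => (hgsum N).summable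
  have hdiff_le : ∀ N n, ‖f n - g N n‖ ≤ C * ρ ^ n + C * ρ ^ n := by
    intro N n
    exact (norm_sub_le _ _).trans (add_le_add (bound_tau n) (bound1 N n))
  have hdiff_s : ∀ N, Summable (fun n => ‖f n - g N n‖) := fun N =>
    Summable.of_nonneg_of_le (fun n => norm_nonneg _) (hdiff_le N) (hgeo.add hgeo)
  -- the key quantitative estimate
  have key : ∀ N, ‖(Polynomial.aeval q) (PM N) - ∑' n, f n‖ ≤ 2 * C * (1 - ρ)⁻¹ * ρ ^ (N + 1) := by
    intro N
    have e1 : (Polynomial.aeval q) (PM N) - ∑' n, f n = -(∑' n, (f n - g N n)) := by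
      rw [Summable.tsum_sub hf (hgsummable N), (hgsum N).tsum_eq]
      ring
    rw [e1, norm_neg]
    refine le_trans (norm_tsum_le_tsum_norm (hdiff_s N)) ?_
    rw [← Summable.sum_add_tsum_nat_add (N + 1) (hdiff_s N)]
    have hzero : ∑ n ∈ Finset.range (N + 1), ‖f n - g N n‖ = 0 := by
      apply Finset.sum_eq_zero
      intro n hn
      have hn' : n ≤ N := by
        have := Finset.mem_range.mp hn; omega
      have : g N n = f n := by
        rw [hgdef, hfdef]
        simp only
        rw [PM_coeff_stab hn']
      rw [this, sub_self, norm_zero]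
    rw [hzero, zero_add]
    have hshift : ∀ m : ℕ, ‖f (m + (N + 1)) - g N (m + (N + 1))‖ ≤
        (2 * C * ρ ^ (N + 1)) * ρ ^ m := by
      intro m
      refine (hdiff_le N (m + (N + 1))).trans ?_
      rw [pow_add]
      ring_nf
      nlinarith [pow_nonneg hρ0 m, pow_nonneg hρ0 (N + 1), hC0]
    calc (∑' m, ‖f (m + (N + 1)) - g N (m + (N + 1))‖)
        ≤ ∑' m : ℕ, (2 * C * ρ ^ (N + 1)) * ρ ^ m := by
          apply Summable.tsum_le_tsum hshift ((summable_nat_add_iff (N + 1)).mpr (hdiff_s N))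
            ((summable_geometric_of_lt_one hρ0 hρ1).mul_left _)
      _ = (2 * C * ρ ^ (N + 1)) * (1 - ρ)⁻¹ := by
          rw [tsum_mul_left, tsum_geometric_of_lt_one hρ0 hρ1]
      _ = 2 * C * (1 - ρ)⁻¹ * ρ ^ (N + 1) := by ring
  -- convergence of the truncations to the series
  have tendA : Tendsto (fun N => (Polynomial.aeval q) (PM N)) atTop (𝓝 (∑' n, f n)) := by
    rw [tendsto_iff_norm_sub_tendsto_zero]
    apply squeeze_zero (fun N => norm_nonneg _) key
    have h1 : Tendsto (fun N : ℕ => ρ ^ (N + 1)) atTop (𝓝 0) :=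
      (tendsto_pow_atTop_nhds_zero_of_lt_one hρ0 hρ1).comp (tendsto_add_atTop_nat 1)
    simpa using h1.const_mul (2 * C * (1 - ρ)⁻¹)
  -- convergence of the truncations to the infinite product
  have haeval_prod : ∀ N, (Polynomial.aeval q) (PM N) =
      q * ∏ ℓ ∈ Finset.range N, (1 - q ^ (ℓ + 1)) ^ 24 := by
    intro N
    rw [PM, map_mul, map_prod, Polynomial.aeval_X]
    congr 1
    rw [show Finset.Icc 1 N = Finset.Ico 1 (N + 1) by rfl, Finset.prod_Ico_eq_prod_range]
    simp [add_comm]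
  have hqpow_lt : ∀ m : ℕ, ‖q ^ (m + 1)‖ < 1 := by
    intro m
    rw [norm_pow]
    exact pow_lt_one₀ hr0 hr1 (by omega)
  have hne : ∀ ℓ : ℕ, (1 - q ^ (ℓ + 1)) ≠ 0 := by
    intro ℓ h
    rw [sub_eq_zero] at h
    have := hqpow_lt ℓ
    rw [← h] at this
    simp at this
  have hlog_sum : Summable (fun ℓ : ℕ => Complex.log ((1 - q ^ (ℓ + 1)) ^ 24)) := by
    have hev : ∀ᶠ (n : ℕ) in atTop, r ^ n < 2⁻¹ / 2 ^ 24 := by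
      apply Filter.Tendsto.eventually_lt_const (by positivity)
        (tendsto_pow_atTop_nhds_zero_of_lt_one hr0 hr1)
    obtain ⟨k, hk⟩ := hev.exists
    rw [← summable_nat_add_iff k]
    have hbound : ∀ ℓ : ℕ, ‖Complex.log ((1 - q ^ (ℓ + k + 1)) ^ 24)‖ ≤
        ((3 / 2) * 2 ^ 24 * r ^ (k + 1)) * r ^ ℓ := by
      intro ℓ
      set w : ℂ := q ^ (ℓ + k + 1) with hwdef
      set u : ℂ := (1 - w) ^ 24 - 1 with hudef
      have hw1 : ‖w‖ ≤ 1 := by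
        rw [hwdef, norm_pow]
        exact le_of_lt (pow_lt_one₀ hr0 hr1 (by omega))
      have hwr : ‖w‖ = r ^ (ℓ + k + 1) := by rw [hwdef, norm_pow]
      have hu24 : ‖u‖ ≤ 2 ^ 24 * r ^ (ℓ + k + 1) := by
        rw [← hwr]
        exact norm_one_sub_pow_sub_one_le hw1
      have hu12 : ‖u‖ ≤ 1 / 2 := by
        have h1 : r ^ (ℓ + k + 1) ≤ r ^ k :=
          pow_le_pow_of_le_one hr0 hr1.le (by omega)
        have h2 : (2 : ℝ) ^ 24 * r ^ (ℓ + k + 1) ≤ 2 ^ 24 * (2⁻¹ / 2 ^ 24) := by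
          have := hk.le
          nlinarith [pow_nonneg hr0 (ℓ + k + 1)]
        calc ‖u‖ ≤ 2 ^ 24 * r ^ (ℓ + k + 1) := hu24
          _ ≤ 2 ^ 24 * (2⁻¹ / 2 ^ 24) := h2
          _ = 1 / 2 := by norm_num
      have hrw : (1 - w) ^ 24 = 1 + u := by rw [hudef]; ring
      rw [hrw]
      calc ‖Complex.log (1 + u)‖ ≤ 3 / 2 * ‖u‖ :=
            Complex.norm_log_one_add_half_le_self (by linarith)
        _ ≤ 3 / 2 * (2 ^ 24 * r ^ (ℓ + k + 1)) := by linarith [hu24]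
        _ = ((3 / 2) * 2 ^ 24 * r ^ (k + 1)) * r ^ ℓ := by
            rw [show ℓ + k + 1 = (k + 1) + ℓ by omega, pow_add]
            ring
    exact Summable.of_norm_bounded
      ((summable_geometric_of_lt_one hr0 hr1).mul_left _) hbound
  have hmult : Multipliable (fun ℓ : ℕ => (1 - q ^ (ℓ + 1)) ^ 24) := by
    have := Complex.multipliable_of_summable_log (f := fun ℓ : ℕ => (1 - q ^ (ℓ + 1)) ^ 24)
      hlog_sum
    exact this
  have tendB : Tendsto (fun N => (Polynomial.aeval q) (PM N)) atTop (𝓝 (discForm z)) := by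
    have h1 := hmult.hasProd.tendsto_prod_nat
    have h2 := h1.const_mul q
    exact Tendsto.congr (fun N => (haeval_prod N).symm) h2
  have hkey : ∑' n, f n = discForm z := tendsto_nhds_unique tendA tendB
  -- final packaging
  have hqpow : ∀ n : ℕ,
      Complex.exp (2 * Real.pi * Complex.I * ((n : ℂ) + 1) * z) = q ^ (n + 1) := by
    intro n
    rw [hqdef, ← Complex.exp_nat_mul]
    congr 1
    push_cast
    ring
  constructor
  · refine ((summable_nat_add_iff 1).mpr hfs).congr fun n => ?_
    rw [hqpow n]
  · have h0 : f 0 = 0 := by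
      rw [hfdef]; simp [tau_zero]
    have hsplit := Summable.tsum_eq_zero_add hf
    rw [h0, zero_add] at hsplit
    calc (∑' n : ℕ, (ramanujanTau (n + 1) : ℂ) *
          Complex.exp (2 * Real.pi * Complex.I * ((n : ℂ) + 1) * z))
        = ∑' n : ℕ, f (n + 1) := by
          apply tsum_congr
          intro n
          rw [hqpow n, hfdef]
      _ = ∑' n, f n := hsplit.symm
      _ = discForm z := hkey
end
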